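/- arXiv:2211.15208 — 2 statements merged into one kernel-verified Lean document; each statement's English description precedes it below -/
import Mathlib

section
/- Let μ = Σ_{j=1}^n a_j δ_{y_j} with distinct y_j ∈ ℝ and a_j ∈ ℂ, and μ̂ = Σ_{l=1}^k â_l δ_{ŷ_l} with distinct ŷ_l ∈ ℝ and â_l ∈ ℂ, and suppose F[μ̂](ω) = F[μ](ω) + w(ω) for all ω ∈ [0, Ω], where |w(ω)| < σ for all ω ∈ [0, Ω]. Fix j ∈ {1,…,n}, let ŷ_{j'} be a point among the ŷ_l that is closest to y_j, and let S be the finite set consisting of the points y_p for p ≠ j together with those ŷ_l, l ≠ j', that are not equal to any y_p; write s = #S. Then: (i) for any ω* with 0 < ω* ≤ Ω/s such that e^{i y_j ω*} and e^{i q ω*} (q ∈ S) are pairwise distinct, |â_{j'} · Π_{q∈S} (e^{i ŷ_{j'} ω*} − e^{i q ω*})/(e^{i y_j ω*} − e^{i q ω*}) − a_j| < 2^s σ / Π_{q∈S} |e^{i y_j ω*} − e^{i q ω*}|; and (ii) for any ω* with 0 < ω* ≤ Ω/(s+1) such that e^{i y_j ω*} and e^{i q ω*} (q ∈ S) are pairwise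 distinct, |(e^{i ŷ_{j'} ω*} − e^{i y_j ω*}) · a_j| < 2^{s+1} σ / Π_{q∈S} |e^{i y_j ω*} − e^{i q ω*}|. -/
/-!
Write `e t = exp (i t ω*)`. If `P` has degree `D` and `D ω* ≤ Ω`, sampling the data at
`0, ω*, …, D ω*` and combining the samples with the coefficients of `P` gives
`∑ â_l P(e ŷ_l) - ∑ a_p P(e y_p) = ∑_m P_m w(m ω*)`, of modulus `< (∑ |P_m|) σ`. Take
`P = ∏_{q ∈ S} (X - e q)`, times `X - e ŷ_{j'}` for (ii). Its roots lie on the unit circle, so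
`∑ |P_m| ≤ 2 ^ deg P`, and it vanishes at every node except `e y_j` and `e ŷ_{j'}`: a point
`ŷ_l` with `l ≠ j'` cannot equal `y_j` because `ŷ_{j'}` is the closest point, so it lies in `S`.
Dividing by `P(e y_j) = ∏_{q ∈ S} (e y_j - e q)` gives both bounds.
-/

open Polynomial Finset

namespace Polynomial

variable {R : Type*}

theorem sum_norm_coeff_multiset_prod_X_sub_C_le [NormedCommRing R] [NormOneClass R] (T : Multiset R)
    (hT : ∀ z ∈ T, ‖z‖ ≤ 1) :
    ∑ m ∈ range (Multiset.card T + 1), ‖((T.map fun z => X - C z).prod).coeff m‖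
      ≤ 2 ^ Multiset.card T := by
  have := NormOneClass.nontrivial (G := R)
  induction T using Multiset.induction with
  | empty => simp
  | cons z T ih =>
    set P := (T.map fun z => X - C z).prod
    have hz : ‖z‖ ≤ 1 := hT z (Multiset.mem_cons_self _ _)
    have hP : ∑ m ∈ range (Multiset.card T + 1), ‖P.coeff m‖ ≤ 2 ^ Multiset.card T :=
      ih fun x hx => hT x (Multiset.mem_cons_of_mem hx)
    have hPtop : P.coeff (Multiset.card T + 1) = 0 :=
      coeff_eq_zero_of_natDegree_lt <| by
        rw [natDegree_multiset_prod_X_sub_C_eq_card]; exact Nat.lt_succ_self _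
    have hX : ∑ m ∈ range (Multiset.card T + 2), ‖(X * P).coeff m‖
        = ∑ m ∈ range (Multiset.card T + 1), ‖P.coeff m‖ := by
      simp [sum_range_succ', coeff_X_mul]
    have hC : ∑ m ∈ range (Multiset.card T + 2), ‖(C z * P).coeff m‖
        ≤ ∑ m ∈ range (Multiset.card T + 1), ‖P.coeff m‖ := by
      rw [sum_range_succ, coeff_C_mul, hPtop, mul_zero, norm_zero, add_zero]
      exact sum_le_sum fun m _ => by
        rw [coeff_C_mul]
        exact (norm_mul_le _ _).trans (mul_le_of_le_one_left (norm_nonneg _) hz)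
    rw [Multiset.map_cons, Multiset.prod_cons, Multiset.card_cons, pow_succ, mul_two]
    calc ∑ m ∈ range (Multiset.card T + 2), ‖((X - C z) * P).coeff m‖
        ≤ ∑ m ∈ range (Multiset.card T + 2), (‖(X * P).coeff m‖ + ‖(C z * P).coeff m‖) :=
          sum_le_sum fun m _ => by rw [sub_mul, coeff_sub]; exact norm_sub_le _ _
      _ ≤ 2 ^ Multiset.card T + 2 ^ Multiset.card T := by
          rw [sum_add_distrib, hX]; exact add_le_add hP (hC.trans hP)

theorem sum_mul_eval_eq_sum_coeff_mul [CommSemiring R] {ι : Type*} (s : Finset ι)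
    (b u : ι → R) {P : R[X]} {D : ℕ} (hP : P.natDegree ≤ D) :
    ∑ i ∈ s, b i * P.eval (u i) = ∑ m ∈ range (D + 1), P.coeff m * ∑ i ∈ s, b i * u i ^ m := by
  simp_rw [eval_eq_sum_range' (Nat.lt_succ_of_le hP), mul_sum]
  rw [sum_comm]
  exact sum_congr rfl fun _ _ => sum_congr rfl fun _ _ => by ring

theorem norm_sum_coeff_mul_lt [NormedRing R] {P : R[X]} (hP : P ≠ 0) {D : ℕ}
    (hD : P.natDegree ≤ D) {ε : ℕ → R} {σ : ℝ} (hε : ∀ m ≤ D, ‖ε m‖ < σ) :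
    ‖∑ m ∈ range (D + 1), P.coeff m * ε m‖ < (∑ m ∈ range (D + 1), ‖P.coeff m‖) * σ := by
  rw [sum_mul]
  refine (norm_sum_le _ _).trans_lt <| sum_lt_sum (fun m hm => ?_)
    ⟨P.natDegree, mem_range.2 (Nat.lt_succ_of_le hD), ?_⟩
  · exact (norm_mul_le _ _).trans <| mul_le_mul_of_nonneg_left
      (hε m (Nat.le_of_lt_succ (mem_range.1 hm))).le (norm_nonneg _)
  · exact (norm_mul_le _ _).trans_lt <| mul_lt_mul_of_pos_left (hε _ hD)
      (norm_pos_iff.2 (leadingCoeff_ne_zero.2 hP))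

end Polynomial

open Complex in
theorem Complex.exp_I_mul_mul_natCast_mul (t ω : ℝ) (m : ℕ) :
    exp (I * t * ((m * ω : ℝ) : ℂ)) = exp (I * t * ω) ^ m := by
  rw [← exp_nat_mul]; push_cast; ring_nf

theorem norm_sum_mul_eval_sub_sum_mul_eval_lt {R ι κ : Type*} [NormedCommRing R] [NormOneClass R]
    [Fintype ι] [Fintype κ] (b u : ι → R) (a v : κ → R) (ε : ℕ → R) {σ : ℝ}
    (T : Multiset R) (hT : ∀ z ∈ T, ‖z‖ ≤ 1)
    (hmom : ∀ m ≤ Multiset.card T, ∑ i, b i * u i ^ m = ∑ p, a p * v p ^ m + ε m)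
    (hε : ∀ m ≤ Multiset.card T, ‖ε m‖ < σ) :
    ‖∑ i, b i * (T.map fun z => u i - z).prod - ∑ p, a p * (T.map fun z => v p - z).prod‖
      < 2 ^ Multiset.card T * σ := by
  have := NormOneClass.nontrivial (G := R)
  set P := (T.map fun z => X - C z).prod
  have hP : P.natDegree = Multiset.card T := natDegree_multiset_prod_X_sub_C_eq_card T
  have hPne : P ≠ 0 := (monic_multiset_prod_of_monic _ _ fun z _ => monic_X_sub_C z).ne_zero
  have heval : ∀ x, P.eval x = (T.map fun z => x - z).prod := fun x => by
    simp [P, eval_multiset_prod, Multiset.map_map]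
  have hσ : 0 ≤ σ := (norm_nonneg _).trans (hε 0 (Nat.zero_le _)).le
  simp_rw [← heval]
  calc ‖∑ i, b i * P.eval (u i) - ∑ p, a p * P.eval (v p)‖
      = ‖∑ m ∈ range (Multiset.card T + 1), P.coeff m * ε m‖ := by
        rw [sum_mul_eval_eq_sum_coeff_mul _ _ _ hP.le, sum_mul_eval_eq_sum_coeff_mul _ _ _ hP.le,
          ← sum_sub_distrib]
        refine congrArg _ (sum_congr rfl fun m hm => ?_)
        rw [hmom m (Nat.le_of_lt_succ (mem_range.1 hm))]
        ring
    _ < (∑ m ∈ range (Multiset.card T + 1), ‖P.coeff m‖) * σ :=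
        norm_sum_coeff_mul_lt hPne hP.le hε
    _ ≤ 2 ^ Multiset.card T * σ :=
        mul_le_mul_of_nonneg_right (sum_norm_coeff_multiset_prod_X_sub_C_le T hT) hσ

theorem Fintype.sum_mul_prod_sub_eq_single {R ι α : Type*} [CommRing R] [Fintype ι]
    (c : ι → R) (x : ι → α) (e : α → R) {T : Multiset α} (i : ι) (h : ∀ l ≠ i, x l ∈ T) :
    ∑ l, c l * (T.map fun q => e (x l) - e q).prod = c i * (T.map fun q => e (x i) - e q).prod :=
  Fintype.sum_eq_single i fun l hl => by
    rw [Multiset.prod_eq_zero (Multiset.mem_map.2 ⟨x l, h l hl, sub_self _⟩), mul_zero]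

open Complex in
theorem norm_sum_mul_prod_exp_sub_sub_lt {ι κ : Type*} [Fintype ι] [Fintype κ] {Ω σ ωs : ℝ}
    (y : κ → ℝ) (a : κ → ℂ) (yh : ι → ℝ) (ah : ι → ℂ) (w : ℝ → ℂ)
    (hw : ∀ ω ∈ Set.Icc (0 : ℝ) Ω, ‖w ω‖ < σ)
    (hdata : ∀ ω ∈ Set.Icc (0 : ℝ) Ω,
      ∑ l, ah l * exp (I * (yh l : ℂ) * (ω : ℂ)) = ∑ p, a p * exp (I * (y p : ℂ) * (ω : ℂ)) + w ω)
    (hω : 0 < ωs) (T : Multiset ℝ) (hTω : Multiset.card T * ωs ≤ Ω) :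
    ‖∑ l, ah l * (T.map fun q : ℝ => exp (I * yh l * ωs) - exp (I * q * ωs)).prod
        - ∑ p, a p * (T.map fun q : ℝ => exp (I * y p * ωs) - exp (I * q * ωs)).prod‖
      < 2 ^ Multiset.card T * σ := by
  have hsample : ∀ m ≤ Multiset.card T, (m * ωs : ℝ) ∈ Set.Icc 0 Ω := fun m hm =>
    ⟨by positivity, (mul_le_mul_of_nonneg_right (by exact_mod_cast hm) hω.le).trans hTω⟩
  have := norm_sum_mul_eval_sub_sum_mul_eval_lt ah (fun l => exp (I * yh l * ωs))
    a (fun p => exp (I * y p * ωs)) (fun m => w (m * ωs)) (T.map fun q : ℝ => exp (I * q * ωs))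
    (by simp [mul_assoc, ← ofReal_mul, norm_exp_I_mul_ofReal])
    (fun m hm => by
      simpa only [exp_I_mul_mul_natCast_mul] using hdata _ (hsample m (by simpa using hm)))
    (fun m hm => hw _ (hsample m (by simpa using hm)))
  simpa [Multiset.map_map, Function.comp_def] using this

open Complex in
theorem norm_mul_prod_exp_sub_sub_lt {ι κ : Type*} [Fintype ι] [Fintype κ] {Ω σ ωs : ℝ}
    {y : κ → ℝ} {a : κ → ℂ} {yh : ι → ℝ} {ah : ι → ℂ} {w : ℝ → ℂ}
    (hw : ∀ ω ∈ Set.Icc (0 : ℝ) Ω, ‖w ω‖ < σ)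
    (hdata : ∀ ω ∈ Set.Icc (0 : ℝ) Ω,
      ∑ l, ah l * exp (I * (yh l : ℂ) * (ω : ℂ)) = ∑ p, a p * exp (I * (y p : ℂ) * (ω : ℂ)) + w ω)
    (hω : 0 < ωs) {T : Multiset ℝ} (hTω : Multiset.card T * ωs ≤ Ω) {j : κ} {j' : ι}
    (hyT : ∀ p ≠ j, y p ∈ T) (hyhT : ∀ l ≠ j', yh l ∈ T) :
    ‖ah j' * (T.map fun q : ℝ => exp (I * yh j' * ωs) - exp (I * q * ωs)).prod
        - a j * (T.map fun q : ℝ => exp (I * y j * ωs) - exp (I * q * ωs)).prod‖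
      < 2 ^ Multiset.card T * σ := by
  have := norm_sum_mul_prod_exp_sub_sub_lt y a yh ah w hw hdata hω T hTω
  rwa [Fintype.sum_mul_prod_sub_eq_single ah yh (fun t : ℝ => exp (I * t * ωs)) j' hyhT,
    Fintype.sum_mul_prod_sub_eq_single a y (fun t : ℝ => exp (I * t * ωs)) j hyT] at this

theorem natCast_mul_le_of_le_div {ω Ω : ℝ} {D : ℕ} (hω : 0 < ω) (h : ω ≤ Ω / D) :
    (D : ℝ) * ω ≤ Ω := by
  rcases D.eq_zero_or_pos with rfl | hD
  · simp only [Nat.cast_zero, div_zero] at h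
    linarith
  · exact (le_div_iff₀' (by exact_mod_cast hD)).1 h

theorem norm_lt_div_prod_norm {K ι : Type*} [NormedField K] {s : Finset ι} {B : ι → K} {x : K}
    {r : ℝ} (hB : ∀ i ∈ s, B i ≠ 0) (h : ‖x * ∏ i ∈ s, B i‖ < r) :
    ‖x‖ < r / ∏ i ∈ s, ‖B i‖ := by
  rwa [lt_div_iff₀ (prod_pos fun i hi => norm_pos_iff.2 (hB i hi)), ← norm_prod, ← norm_mul]

theorem ne_of_forall_abs_sub_le {ι : Type*} {yh : ι → ℝ} (hyh : Function.Injective yh) {x : ℝ}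
    {j' l : ι} (hj' : ∀ l, |yh j' - x| ≤ |yh l - x|) (hl : l ≠ j') : yh l ≠ x := by
  intro h
  have hj'x : yh j' = x := by simpa [h, sub_eq_zero] using hj' l
  exact hl (hyh (h.trans hj'x.symm))

section otherNodes

variable {ι κ : Type*} [Fintype ι] [Fintype κ] [DecidableEq ι] [DecidableEq κ]
  (y : ι → ℝ) (yh : κ → ℝ) (j : ι) (j' : κ)

noncomputable def otherNodes : Finset ℝ :=
  image y (univ.erase j) ∪ image yh ((univ.erase j').filter fun l => ∀ p, yh l ≠ y p)

variable {y yh j j'}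

theorem mem_otherNodes_of_ne {p : ι} (hp : p ≠ j) : y p ∈ otherNodes y yh j j' :=
  mem_union_left _ (mem_image_of_mem y (mem_erase.2 ⟨hp, mem_univ p⟩))

theorem notMem_otherNodes (hy : Function.Injective y) : y j ∉ otherNodes y yh j j' := by
  simp only [otherNodes, mem_union, mem_image, mem_erase, mem_filter, not_or, not_exists, not_and]
  exact ⟨fun p hp h => hp.1 (hy h), fun l hl h => hl.2 j h⟩

theorem mem_otherNodes_of_ne_of_ne {l : κ} (hl : l ≠ j') (hlj : yh l ≠ y j) :
    yh l ∈ otherNodes y yh j j' := by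
  by_cases hex : ∃ p, yh l = y p
  · obtain ⟨p, hp⟩ := hex
    exact hp ▸ mem_otherNodes_of_ne fun hpj => hlj (hpj ▸ hp)
  · push Not at hex
    exact mem_union_right _ (mem_image_of_mem yh (mem_filter.2 ⟨mem_erase.2 ⟨hl, mem_univ l⟩, hex⟩))

end otherNodes

theorem location_amplitude_noise_bounds_general
    (n k : ℕ)
    (Ω σ : ℝ)
    (y : Fin n → ℝ) (hy : Function.Injective y) (a : Fin n → ℂ)
    (yh : Fin k → ℝ) (hyh : Function.Injective yh) (ah : Fin k → ℂ)
    (w : ℝ → ℂ)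
    (hw : ∀ ω ∈ Set.Icc (0 : ℝ) Ω, ‖w ω‖ < σ)
    (hdata : ∀ ω ∈ Set.Icc (0 : ℝ) Ω,
      ∑ l, ah l * Complex.exp (Complex.I * (yh l : ℂ) * (ω : ℂ))
        = ∑ p, a p * Complex.exp (Complex.I * (y p : ℂ) * (ω : ℂ)) + w ω)
    (j : Fin n) (j' : Fin k)
    (hj' : ∀ l, |yh j' - y j| ≤ |yh l - y j|)
    (S : Finset ℝ)
    (hS : S = Finset.image y (Finset.univ.erase j)
        ∪ Finset.image yh ((Finset.univ.erase j').filter fun l => ∀ p, yh l ≠ y p))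
    (s : ℕ) (hs : s = S.card) :
    (∀ ωs : ℝ, 0 < ωs → ωs ≤ Ω / s →
      Set.InjOn (fun t : ℝ => Complex.exp (Complex.I * (t : ℂ) * (ωs : ℂ)))
        (insert (y j) (S : Set ℝ)) →
      ‖(ah j' * ∏ q ∈ S,
              ((Complex.exp (Complex.I * (yh j' : ℂ) * (ωs : ℂ))
                  - Complex.exp (Complex.I * (q : ℂ) * (ωs : ℂ)))
                / (Complex.exp (Complex.I * (y j : ℂ) * (ωs : ℂ))
                  - Complex.exp (Complex.I * (q : ℂ) * (ωs : ℂ))))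
            - a j)‖
        < 2 ^ s * σ /
            ∏ q ∈ S,
              ‖(Complex.exp (Complex.I * (y j : ℂ) * (ωs : ℂ))
                - Complex.exp (Complex.I * (q : ℂ) * (ωs : ℂ)))‖) ∧
    (∀ ωs : ℝ, 0 < ωs → ωs ≤ Ω / (s + 1) →
      Set.InjOn (fun t : ℝ => Complex.exp (Complex.I * (t : ℂ) * (ωs : ℂ)))
        (insert (y j) (S : Set ℝ)) →
      ‖((Complex.exp (Complex.I * (yh j' : ℂ) * (ωs : ℂ))
              - Complex.exp (Complex.I * (y j : ℂ) * (ωs : ℂ))) * a j)‖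
        < 2 ^ (s + 1) * σ /
            ∏ q ∈ S,
              ‖(Complex.exp (Complex.I * (y j : ℂ) * (ωs : ℂ))
                - Complex.exp (Complex.I * (q : ℂ) * (ωs : ℂ)))‖) := by
  -- `congr!` reconciles the two instances deciding `∀ p, yh l ≠ y p`
  replace hS : S = otherNodes y yh j j' := by rw [hS, otherNodes]; congr!
  have hyj : y j ∉ S := hS ▸ notMem_otherNodes hy
  have hyS : ∀ p ≠ j, y p ∈ S := fun p hp => hS ▸ mem_otherNodes_of_ne hp
  have hyhS : ∀ l ≠ j', yh l ∈ S := fun l hl =>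
    hS ▸ mem_otherNodes_of_ne_of_ne hl (ne_of_forall_abs_sub_le hyh hj' hl)
  have hB : ∀ ωs : ℝ,
      Set.InjOn (fun t : ℝ => Complex.exp (Complex.I * t * ωs)) (insert (y j) (S : Set ℝ)) →
      ∀ q ∈ S, Complex.exp (Complex.I * y j * ωs) - Complex.exp (Complex.I * q * ωs) ≠ 0 :=
    fun ωs hinj q hq h =>
      hyj (hinj (Set.mem_insert _ _) (Set.mem_insert_of_mem _ hq) (sub_eq_zero.1 h) ▸ hq)
  subst hs
  refine ⟨fun ωs hω hωΩ hinj => ?_, fun ωs hω hωΩ hinj => ?_⟩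
  · have key := norm_mul_prod_exp_sub_sub_lt (T := S.val) hw hdata hω
      (natCast_mul_le_of_le_div hω hωΩ) hyS hyhS
    simp only [prod_map_val, card_val] at key
    refine norm_lt_div_prod_norm (hB ωs hinj) ?_
    rwa [sub_mul, mul_assoc, ← prod_mul_distrib, prod_congr rfl fun q hq =>
      div_mul_cancel₀ _ (hB ωs hinj q hq)]
  · have key := norm_mul_prod_exp_sub_sub_lt (T := yh j' ::ₘ S.val) hw hdata hω
      (natCast_mul_le_of_le_div hω (by simpa using hωΩ))
      (fun p hp => Multiset.mem_cons_of_mem (hyS p hp))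
      (fun l hl => Multiset.mem_cons_of_mem (hyhS l hl))
    simp only [Multiset.map_cons, Multiset.prod_cons, prod_map_val, Multiset.card_cons, card_val,
      sub_self, zero_mul, mul_zero, zero_sub, norm_neg] at key
    refine norm_lt_div_prod_norm (hB ωs hinj) ?_
    rw [← norm_neg]
    convert key using 2
    ring

/-- **Corollary of the location-amplitude identities (noise bounds).**
With the setting of the location-amplitude identities and `|w(ω)| < σ` on `[0, Ω]`:
(i) for `0 < ω* ≤ Ω/s` with `e^{i y_j ω*}`, `e^{i q ω*}` (`q ∈ S`) pairwise distinct,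
`|â_{j'} Π_{q∈S} (e^{i ŷ_{j'} ω*} − e^{i q ω*})/(e^{i y_j ω*} − e^{i q ω*}) − a_j|
  < 2^s σ / Π_{q∈S} |e^{i y_j ω*} − e^{i q ω*}|`;
(ii) for `0 < ω* ≤ Ω/(s+1)` with the same distinctness,
`|(e^{i ŷ_{j'} ω*} − e^{i y_j ω*}) a_j| < 2^{s+1} σ / Π_{q∈S} |e^{i y_j ω*} − e^{i q ω*}|`. -/
theorem location_amplitude_noise_bounds
    (n k : ℕ) (hn : 0 < n) (hk : 0 < k)
    (Ω σ : ℝ) (hΩ : 0 < Ω) (hσ : 0 < σ)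
    (y : Fin n → ℝ) (hy : Function.Injective y) (a : Fin n → ℂ)
    (yh : Fin k → ℝ) (hyh : Function.Injective yh) (ah : Fin k → ℂ)
    (w : ℝ → ℂ)
    (hw : ∀ ω ∈ Set.Icc (0 : ℝ) Ω, ‖w ω‖ < σ)
    (hdata : ∀ ω ∈ Set.Icc (0 : ℝ) Ω,
      ∑ l, ah l * Complex.exp (Complex.I * (yh l : ℂ) * (ω : ℂ))
        = ∑ p, a p * Complex.exp (Complex.I * (y p : ℂ) * (ω : ℂ)) + w ω)
    (j : Fin n) (j' : Fin k)
    (hj' : ∀ l, |yh j' - y j| ≤ |yh l - y j|)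
    (S : Finset ℝ)
    (hS : S = Finset.image y (Finset.univ.erase j)
        ∪ Finset.image yh ((Finset.univ.erase j').filter fun l => ∀ p, yh l ≠ y p))
    (s : ℕ) (hs : s = S.card) :
    (∀ ωs : ℝ, 0 < ωs → ωs ≤ Ω / s →
      Set.InjOn (fun t : ℝ => Complex.exp (Complex.I * (t : ℂ) * (ωs : ℂ)))
        (insert (y j) (S : Set ℝ)) →
      ‖(ah j' * ∏ q ∈ S,
              ((Complex.exp (Complex.I * (yh j' : ℂ) * (ωs : ℂ))
                  - Complex.exp (Complex.I * (q : ℂ) * (ωs : ℂ)))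
                / (Complex.exp (Complex.I * (y j : ℂ) * (ωs : ℂ))
                  - Complex.exp (Complex.I * (q : ℂ) * (ωs : ℂ))))
            - a j)‖
        < 2 ^ s * σ /
            ∏ q ∈ S,
              ‖(Complex.exp (Complex.I * (y j : ℂ) * (ωs : ℂ))
                - Complex.exp (Complex.I * (q : ℂ) * (ωs : ℂ)))‖) ∧
    (∀ ωs : ℝ, 0 < ωs → ωs ≤ Ω / (s + 1) →
      Set.InjOn (fun t : ℝ => Complex.exp (Complex.I * (t : ℂ) * (ωs : ℂ)))
        (insert (y j) (S : Set ℝ)) →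
      ‖((Complex.exp (Complex.I * (yh j' : ℂ) * (ωs : ℂ))
              - Complex.exp (Complex.I * (y j : ℂ) * (ωs : ℂ))) * a j)‖
        < 2 ^ (s + 1) * σ /
            ∏ q ∈ S,
              ‖(Complex.exp (Complex.I * (y j : ℂ) * (ωs : ℂ))
                - Complex.exp (Complex.I * (q : ℂ) * (ωs : ℂ)))‖) :=
  location_amplitude_noise_bounds_general n k Ω σ y hy a yh hyh ah w hw hdata j j' hj' S hS s hs
end

section
/- For every integer n ≥ 2, one has (n − 1/2)^{2n−2} / (ζ(n) · (n−2)!) ≤ 2^{n − 3/2} · e^{2n−1} / (π^{3/2} · max(√(n−2), 1)). -/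
/-!
Write `ζ(n) = p! q!` with `p = ⌈(n - 1)/2⌉`, `q = ⌊(n - 1)/2⌋`, and put `k = n - 2`,
so that `p + q = k + 1`.
Stirling's lower bound `√(2πj) (j/e)^j ≤ j!` for `p!`, `q!` and `k!` leaves the elementary
inequality `(k + 3/2)^(2k+2) ≤ 2^(k+2) e² √(pq) p^p q^q k^k`. Two applications of
`1 + x ≤ eˣ` trade `(k + 3/2)^(2k+2)` for `e (k + 1)^(2k+2)` and `(k + 1)^k` for `e k^k`, after
which it remains to see `(p + q)^(p+q+1) ≤ 2^(p+q+1) √(pq) p^p q^q` for a balanced split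
`q ≤ p ≤ q + 1`: an equality when `p = q`, and Bernoulli's inequality when `p = q + 1`.
The bound is asymptotically sharp, so no constant may be lost along the way.
For `n = 2` Stirling's bound for `0!` is vacuous and the inequality is checked numerically.
-/

/-- `ζ(k) = (((k−1)/2)!)²` for odd `k`, and `ζ(k) = (k/2)!((k−2)/2)!` for even `k`. -/
noncomputable def zeta (k : ℕ) : ℝ :=
  if k % 2 = 1 then ((((k - 1) / 2).factorial : ℝ)) ^ 2
  else ((k / 2).factorial : ℝ) * (((k - 2) / 2).factorial : ℝ)

open Real Nat

lemma zeta_eq_factorial_mul_factorial (n : ℕ) : zeta n = (n / 2)! * ((n - 1) / 2)! := by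
  unfold zeta
  split_ifs
  · rw [sq, show n / 2 = (n - 1) / 2 by omega]
  · rw [show (n - 2) / 2 = (n - 1) / 2 by omega]

lemma le_factorial_mul_exp_pow_stirling (j : ℕ) : √2 * √π * √j * j ^ j ≤ j ! * exp 1 ^ j := by
  have h := Stirling.le_factorial_stirling j
  rwa [sqrt_mul (by positivity), sqrt_mul zero_le_two, div_pow, ← mul_div_assoc,
    div_le_iff₀ (by positivity)] at h

lemma add_pow_le_exp_mul_pow {a b : ℝ} (ha : 0 < a) (hab : 0 ≤ a + b) (j : ℕ) :
    (a + b) ^ j ≤ exp (j * b / a) * a ^ j := by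
  have h : a + b ≤ a * exp (b / a) :=
    calc a + b = a * (b / a + 1) := by field_simp; ring
      _ ≤ a * exp (b / a) := by gcongr; exact add_one_le_exp _
  calc (a + b) ^ j ≤ (a * exp (b / a)) ^ j := pow_le_pow_left₀ hab h j
    _ = exp (j * b / a) * a ^ j := by rw [mul_pow, ← exp_nat_mul, mul_div_assoc, mul_comm]

lemma pow_le_add_one_pow_mul_sub_one_pow {x : ℝ} (hx : 2 ≤ x) {j : ℕ} (hj : (j : ℝ) ≤ x) :
    x ^ (2 * j + 2) ≤ (x + 1) ^ (j + 2) * (x - 1) ^ j := by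
  have hx0 : 0 < x := by linarith
  have bernoulli : x ^ (2 * j) * (1 - j / x ^ 2) ≤ (x ^ 2 - 1) ^ j := by
    have h := one_add_mul_le_pow (a := -1 / x ^ 2) (by
      have : 1 / x ^ 2 ≤ 1 := by rw [div_le_one (by positivity)]; nlinarith
      linarith [neg_div (x ^ 2) 1]) j
    calc x ^ (2 * j) * (1 - j / x ^ 2) = (x ^ 2) ^ j * (1 + j * (-1 / x ^ 2)) := by
          rw [pow_mul]; ring
      _ ≤ (x ^ 2) ^ j * (1 + -1 / x ^ 2) ^ j := by gcongr
      _ = (x ^ 2 - 1) ^ j := by rw [← mul_pow]; field_simp; ring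
  have hjx : j / x ^ 2 ≤ 1 / x := by
    rw [div_le_div_iff₀ (by positivity) hx0]; nlinarith
  have hx2 : x ^ 2 ≤ (1 - 1 / x) * (x + 1) ^ 2 := by
    rw [one_sub_div hx0.ne', div_mul_eq_mul_div, le_div_iff₀ hx0]; nlinarith
  calc x ^ (2 * j + 2) = x ^ (2 * j) * x ^ 2 := pow_add _ _ _
    _ ≤ x ^ (2 * j) * ((1 - 1 / x) * (x + 1) ^ 2) := by gcongr
    _ ≤ x ^ (2 * j) * (1 - j / x ^ 2) * (x + 1) ^ 2 := by
        rw [← mul_assoc]; gcongr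
    _ ≤ (x ^ 2 - 1) ^ j * (x + 1) ^ 2 := by gcongr
    _ = (x + 1) ^ (j + 2) * (x - 1) ^ j := by
        rw [show x ^ 2 - 1 = (x + 1) * (x - 1) by ring, mul_pow]; ring

lemma add_pow_le_two_pow_mul_sqrt_mul_pow_mul_pow {p q : ℕ} (hq : 0 < q) (hqp : q ≤ p)
    (hpq : p ≤ q + 1) :
    ((p : ℝ) + q) ^ (p + q + 1) ≤ 2 ^ (p + q + 1) * √(p * q) * p ^ p * q ^ q := by
  rw [← pow_le_pow_iff_left₀ (by positivity) (by positivity) two_ne_zero]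
  obtain rfl | rfl : p = q ∨ p = q + 1 := by omega
  · refine le_of_eq ?_
    rw [sqrt_mul_self (by positivity), ← two_mul]
    simp only [mul_pow]
    ring
  · have hq1 : (1 : ℝ) ≤ q := by exact_mod_cast hq
    have h := pow_le_add_one_pow_mul_sub_one_pow (x := 2 * q + 1) (j := 2 * q + 1)
      (by linarith) (by push_cast; rfl)
    calc ((((q + 1 : ℕ) : ℝ) + q) ^ (q + 1 + q + 1)) ^ 2
        = (2 * q + 1) ^ (2 * (2 * q + 1) + 2) := by push_cast; ring
      _ ≤ (2 * q + 1 + 1) ^ (2 * q + 1 + 2) * (2 * q + 1 - 1) ^ (2 * q + 1) := h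
      _ = (2 * (q + 1)) ^ (2 * q + 3) * (2 * q) ^ (2 * q + 1) := by
        rw [show (2 : ℝ) * q + 1 + 1 = 2 * (q + 1) by ring,
          show (2 : ℝ) * q + 1 - 1 = 2 * q by ring]
      _ = _ := by
        simp only [mul_pow, sq_sqrt (by positivity : (0 : ℝ) ≤ ((q + 1 : ℕ) : ℝ) * q)]
        push_cast; ring

lemma add_three_halves_pow_le {p q k : ℕ} (hq : 0 < q) (hqp : q ≤ p) (hpq : p ≤ q + 1)
    (hk : p + q = k + 1) :
    ((k : ℝ) + 3 / 2) ^ (2 * k + 2) ≤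
      2 ^ (k + 2) * exp 1 ^ 2 * √(p * q) * p ^ p * q ^ q * k ^ k := by
  have hk0 : (0 : ℝ) < k := by exact_mod_cast (by omega : 0 < k)
  have hsplit := add_pow_le_two_pow_mul_sqrt_mul_pow_mul_pow hq hqp hpq
  rw [show (p : ℝ) + q = k + 1 by exact_mod_cast hk, hk] at hsplit
  have hhalf : ((k : ℝ) + 3 / 2) ^ (2 * k + 2) ≤ exp 1 * (k + 1) ^ (2 * k + 2) := by
    have h := add_pow_le_exp_mul_pow (a := k + 1) (b := 1 / 2) (by positivity) (by positivity)
      (2 * k + 2)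
    rwa [show ((2 * k + 2 : ℕ) : ℝ) * (1 / 2) / (k + 1) = 1 by push_cast; field_simp,
      add_assoc, show (1 : ℝ) + 1 / 2 = 3 / 2 by norm_num] at h
  have hone : ((k : ℝ) + 1) ^ k ≤ exp 1 * k ^ k := by
    have h := add_pow_le_exp_mul_pow hk0 (b := 1) (by positivity) k
    rwa [mul_one, div_self hk0.ne'] at h
  calc ((k : ℝ) + 3 / 2) ^ (2 * k + 2) ≤ exp 1 * (k + 1) ^ (2 * k + 2) := hhalf
    _ = exp 1 * ((k + 1) ^ (k + 1 + 1) * (k + 1) ^ k) := by ring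
    _ ≤ exp 1 * ((2 ^ (k + 1 + 1) * √(p * q) * p ^ p * q ^ q) * (exp 1 * k ^ k)) := by gcongr
    _ = _ := by ring

lemma pow_div_factorial_mul_factorial_mul_factorial_le {p q k : ℕ} (hq : 0 < q) (hqp : q ≤ p)
    (hpq : p ≤ q + 1) (hk : p + q = k + 1) :
    ((k : ℝ) + 3 / 2) ^ (2 * k + 2) / (p ! * q ! * k !) ≤
      2 ^ k * √2 * exp 1 ^ (2 * k + 3) / (√π ^ 3 * √k) := by
  have hk0 : (0 : ℝ) < k := by exact_mod_cast (by omega : 0 < k)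
  have hπ : 0 < √π := sqrt_pos.mpr pi_pos
  rw [div_le_div_iff₀ (by positivity) (by positivity)]
  have h4 : (2 : ℝ) ^ (k + 2) = 2 ^ k * √2 * √2 ^ 3 := by
    rw [pow_add, mul_assoc, show √2 * √2 ^ 3 = (√2 ^ 2) ^ 2 by ring, sq_sqrt zero_le_two]
  calc ((k : ℝ) + 3 / 2) ^ (2 * k + 2) * (√π ^ 3 * √k)
      ≤ (2 ^ (k + 2) * exp 1 ^ 2 * √(p * q) * p ^ p * q ^ q * k ^ k) * (√π ^ 3 * √k) := by
        gcongr; exact add_three_halves_pow_le hq hqp hpq hk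
    _ = 2 ^ k * √2 * exp 1 ^ 2 *
          ((√2 * √π * √p * p ^ p) * (√2 * √π * √q * q ^ q) * (√2 * √π * √k * k ^ k)) := by
        rw [h4, sqrt_mul (Nat.cast_nonneg _)]; ring
    _ ≤ 2 ^ k * √2 * exp 1 ^ 2 *
          ((p ! * exp 1 ^ p) * (q ! * exp 1 ^ q) * (k ! * exp 1 ^ k)) := by
        gcongr 2 ^ k * √2 * exp 1 ^ 2 * (?_ * ?_ * ?_) <;>
          exact le_factorial_mul_exp_pow_stirling _
    _ = 2 ^ k * √2 * exp 1 ^ (2 * k + 3) * (p ! * q ! * k !) := by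
        rw [show 2 * k + 3 = 2 + p + q + k by omega]; ring

lemma nine_div_four_le_sqrt_two_mul_exp_three_div : 9 / 4 ≤ √2 * exp 3 / √π ^ 3 := by
  have hπ : √π ^ 3 ≤ 2 ^ 3 := by
    gcongr; rw [sqrt_le_left zero_le_two]; linarith [pi_le_four]
  have he : 18 ≤ exp 3 :=
    calc (18 : ℝ) ≤ 2.7182818283 ^ 3 := by norm_num
      _ ≤ exp 1 ^ 3 := by gcongr; exact exp_one_gt_d9.le
      _ = exp 3 := by rw [← exp_nat_mul]; norm_num
  rw [le_div_iff₀ (by positivity)]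
  calc 9 / 4 * √π ^ 3 ≤ 1 * exp 3 := by linarith
    _ ≤ √2 * exp 3 := by gcongr; exact one_le_sqrt.mpr one_le_two

/-- **Lemma A.3.**  For every integer `n ≥ 2`,
`(n − 1/2)^{2n−2} / (ζ(n)(n−2)!) ≤ 2^{n−3/2} e^{2n−1} / (π^{3/2} max(√(n−2), 1))`. -/
theorem zeta_factorial_bound (n : ℕ) (hn : 2 ≤ n) :
    ((n : ℝ) - 1 / 2) ^ (2 * n - 2) / (zeta n * ((n - 2).factorial : ℝ))
      ≤ (2 : ℝ) ^ ((n : ℝ) - 3 / 2) * Real.exp 1 ^ (2 * n - 1) /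
          (Real.pi ^ ((3 : ℝ) / 2) * max (Real.sqrt ((n : ℝ) - 2)) 1) := by
  obtain ⟨k, rfl⟩ : ∃ k, n = k + 2 := ⟨n - 2, by omega⟩
  have h2 : (2 : ℝ) ^ (((k + 2 : ℕ) : ℝ) - 3 / 2) = 2 ^ k * √2 := by
    rw [show ((k + 2 : ℕ) : ℝ) - 3 / 2 = k + 1 / 2 by push_cast; ring, rpow_add two_pos,
      rpow_natCast, sqrt_eq_rpow]
  have hπ : π ^ ((3 : ℝ) / 2) = √π ^ 3 := by
    rw [sqrt_eq_rpow, ← rpow_natCast, ← rpow_mul pi_pos.le]; norm_num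
  rw [zeta_eq_factorial_mul_factorial, h2, hπ, show 2 * (k + 2) - 2 = 2 * k + 2 by omega,
    show 2 * (k + 2) - 1 = 2 * k + 3 by omega, show k + 2 - 1 = k + 1 by omega,
    Nat.add_sub_cancel,
    show ((k + 2 : ℕ) : ℝ) - 1 / 2 = k + 3 / 2 by push_cast; ring,
    show ((k + 2 : ℕ) : ℝ) - 2 = k by push_cast; ring]
  obtain rfl | hk := Nat.eq_zero_or_pos k
  · norm_num
    exact nine_div_four_le_sqrt_two_mul_exp_three_div
  · rw [max_eq_left (one_le_sqrt.mpr (by exact_mod_cast hk))]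
    exact pow_div_factorial_mul_factorial_mul_factorial_le (by omega) (by omega) (by omega)
      (by omega)
end
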